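/- arXiv:2106.16218 — 2 statements merged into one kernel-verified Lean document; each statement's English description precedes it below -/
import Mathlib

section
/- Let B and B' be distinct blocks of a connected graph G. Then neither B ⊆ B' nor B' ⊆ B, and moreover |B ∩ B'| ≤ 2. -/
open SimpleGraph

attribute [local instance] Classical.propDecidable

/-- `compNbrs G X C` is the set `N_G(C)` of neighbours (necessarily in `X`) of
the connected component `C` of `G - X`. -/
def compNbrs {V : Type} (G : SimpleGraph V) (X : Set V)
    (C : (G.induce (Xᶜ : Set V)).ConnectedComponent) : Set V :=
  {x | x ∈ X ∧ ∃ y : (Xᶜ : Set V),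
    (G.induce (Xᶜ : Set V)).connectedComponentMk y = C ∧ G.Adj x ↑y}

/-- The torso `G⟦X⟧` of a vertex set `X`: its vertex set is `X`, and distinct
`v, w ∈ X` are adjacent if `vw ∈ E(G)` or `v, w ∈ N_G(C)` for some connected
component `C` of `G - X`. -/
def torso {V : Type} (G : SimpleGraph V) (X : Set V) : SimpleGraph X where
  Adj v w := v ≠ w ∧ (G.Adj ↑v ↑w ∨
    ∃ C, (↑v : V) ∈ compNbrs G X C ∧ (↑w : V) ∈ compNbrs G X C)
  symm := ⟨by
    rintro a b ⟨hab, h | ⟨C, h1, h2⟩⟩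
    · exact ⟨hab.symm, Or.inl h.symm⟩
    · exact ⟨hab.symm, Or.inr ⟨C, h2, h1⟩⟩⟩
  loopless := ⟨by rintro a ⟨h, -⟩; exact h rfl⟩

/-- `X` has adhesion at most `k` in `G` if `|N_G(C)| ≤ k` for every connected
component `C` of `G - X`. -/
def adhesionLE {V : Type} (G : SimpleGraph V) (X : Set V) (k : ℕ) : Prop :=
  ∀ C, (compNbrs G X C).ncard ≤ k

/-- A graph is `k`-connected if it has more than `k` vertices and removing any
set of at most `k - 1` vertices leaves it connected. -/
def IsKConnected {V : Type} [Fintype V] (k : ℕ) (G : SimpleGraph V) : Prop :=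
  k < Fintype.card V ∧ ∀ S : Set V, S.ncard ≤ k - 1 → (G.induce (Sᶜ : Set V)).Connected

/-- A proper block of `G`: a set of vertices whose torso is 3-connected and
whose adhesion is at most 2. -/
def IsProperBlock {V : Type} [Fintype V] (G : SimpleGraph V) (B : Set V) : Prop :=
  IsKConnected 3 (torso G B) ∧ adhesionLE G B 2

/-- A block of `G`: a set `B` of vertices such that either the torso `G⟦B⟧` is
3-connected and `B` has adhesion at most 2, or `G⟦B⟧` is a complete graph of
order 3 and `B` has adhesion at most 2, or `G⟦B⟧` is a complete graph of order
2 and `B` has adhesion at most 1. -/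
def IsBlock {V : Type} [Fintype V] (G : SimpleGraph V) (B : Set V) : Prop :=
  (IsKConnected 3 (torso G B) ∧ adhesionLE G B 2) ∨
  (B.ncard = 3 ∧ torso G B = ⊤ ∧ adhesionLE G B 2) ∨
  (B.ncard = 2 ∧ torso G B = ⊤ ∧ adhesionLE G B 1)


/-! If `v ∈ B' \ B` and `C` is the component of `G - B` containing `v`, with `N = N_G(C)`, then
every edge of the torso `G⟦B'⟧` leaving `C` ends in a set `S` with `|S| ≤ |N| ≤ 2`: a vertex
`n ∈ N ∩ B'` contributes itself, and a vertex `n ∈ N \ B'` contributes the at most one vertex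
outside `C` of the neighbourhood of its component of `G - B'`, since that neighbourhood has at
most two vertices and meets `C`. As `G⟦B'⟧` is 3-connected or complete, deleting `S` cannot
separate `v` from any other vertex of `B'`, so `B ∩ B' ⊆ S`. This gives `|B ∩ B'| ≤ 2`; and if
`B ⊆ B'` then `S = N`, so `B ⊆ N`, contradicting `|N| < |B|`. -/

theorem SimpleGraph.Reachable.mem_of_adj_mem_union {W : Type} {H : SimpleGraph W}
    {A N : Set W} (hA : ∀ ⦃a z⦄, a ∈ A → H.Adj a z → z ∈ A ∪ N) {u v : W}
    (huv : H.Reachable u v) (hN : ∀ x, H.Reachable u x → x ∉ N) (hu : u ∈ A) : v ∈ A := by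
  obtain ⟨p⟩ := huv
  induction p with
  | nil => exact hu
  | cons h _ ih =>
    exact ih (fun x hx => hN x (h.reachable.trans hx))
      ((hA hu h).resolve_right (hN _ h.reachable))

section Separation

variable {V : Type} (G : SimpleGraph V)

def exitSet (A B' : Set V) (n : V) : Set V :=
  if h : n ∈ B' then {n} else
    {z | z ∉ A ∧ z ∈ compNbrs G B' ((G.induce B'ᶜ).connectedComponentMk ⟨n, h⟩) ∧
      (A ∩ compNbrs G B' ((G.induce B'ᶜ).connectedComponentMk ⟨n, h⟩)).Nonempty}

/-- The set `S` of the sketch above, for `A = C` and `N = N_G(C)`. -/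
def sepSet (A N B' : Set V) : Set V :=
  ⋃ n ∈ N, exitSet G A B' n

variable {G} {A N B' : Set V}

theorem exitSet_of_mem {n : V} (hn : n ∈ B') : exitSet G A B' n = {n} := by
  simp [exitSet, hn]

theorem exitSet_subset (n : V) : exitSet G A B' n ⊆ insert n Aᶜ := by
  unfold exitSet
  split_ifs
  · exact Set.singleton_subset_iff.mpr (Set.mem_insert n _)
  · exact fun z hz => Or.inr hz.1

theorem ncard_exitSet_le_one [Finite V] (hB' : adhesionLE G B' 2) (n : V) :
    (exitSet G A B' n).ncard ≤ 1 := by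
  unfold exitSet
  split_ifs with hn
  · exact (Set.ncard_singleton n).le
  set E := (G.induce B'ᶜ).connectedComponentMk ⟨n, hn⟩
  rw [Set.ncard_le_one (Set.toFinite _)]
  rintro z₁ ⟨hz₁A, hz₁E, c, hcA, hcE⟩ z₂ ⟨hz₂A, hz₂E, -⟩
  by_contra hz
  have hc₁ : c ≠ z₁ := by rintro rfl; exact hz₁A hcA
  have hc₂ : c ≠ z₂ := by rintro rfl; exact hz₂A hcA
  have h3 : ({c, z₁, z₂} : Set V).ncard = 3 := Set.ncard_eq_three.mpr ⟨c, z₁, z₂, hc₁, hc₂, hz, rfl⟩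
  have hsub : ({c, z₁, z₂} : Set V) ⊆ compNbrs G B' E := by
    simp only [Set.insert_subset_iff, Set.singleton_subset_iff]
    exact ⟨hcE, hz₁E, hz₂E⟩
  have := Set.ncard_le_ncard hsub (Set.toFinite _)
  have := hB' E
  omega

theorem ncard_sepSet_le [Finite V] (hB' : adhesionLE G B' 2) :
    (sepSet G A N B').ncard ≤ N.ncard := by
  have hN := N.toFinite
  calc (sepSet G A N B').ncard = (⋃ n ∈ hN.toFinset, exitSet G A B' n).ncard := by
        simp [sepSet]
    _ ≤ ∑ n ∈ hN.toFinset, (exitSet G A B' n).ncard := Finset.set_ncard_biUnion_le _ _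
    _ ≤ hN.toFinset.card • 1 := Finset.sum_le_card_nsmul _ _ _ fun n _ =>
        ncard_exitSet_le_one hB' n
    _ = N.ncard := by simp [Set.ncard_eq_toFinset_card N hN]

theorem mem_sepSet_of_mem {n : V} (hN : n ∈ N) (hB' : n ∈ B') : n ∈ sepSet G A N B' :=
  Set.mem_biUnion hN (by simp [exitSet_of_mem hB'])

theorem sepSet_subset_of_subset (h : N ⊆ B') : sepSet G A N B' ⊆ N := by
  intro z hz
  obtain ⟨n, hn, hz⟩ := Set.mem_iUnion₂.mp hz
  rw [exitSet_of_mem (h hn), Set.mem_singleton_iff] at hz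
  exact hz ▸ hn

theorem notMem_sepSet {a : V} (haA : a ∈ A) (haN : a ∉ N) : a ∉ sepSet G A N B' := by
  intro ha
  obtain ⟨n, hn, ha⟩ := Set.mem_iUnion₂.mp ha
  rcases exitSet_subset n ha with rfl | ha
  · exact haN hn
  · exact ha haA

theorem torso_adj_mem_sepSet (hA : ∀ ⦃a z⦄, a ∈ A → G.Adj a z → z ∈ A ∪ N) {a b : B'}
    (ha : (a : V) ∈ A) (hb : (b : V) ∉ A) (hab : (torso G B').Adj a b) :
    (b : V) ∈ sepSet G A N B' := by
  obtain ⟨-, hadj | ⟨E, haE, hbE⟩⟩ := hab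
  · exact mem_sepSet_of_mem ((hA ha hadj).resolve_left hb) b.2
  by_cases hEN : ∃ n ∈ N, ∃ h : n ∉ B', (G.induce B'ᶜ).connectedComponentMk ⟨n, h⟩ = E
  · obtain ⟨n, hn, hnB', rfl⟩ := hEN
    refine Set.mem_biUnion hn ?_
    rw [exitSet, dif_neg hnB']
    exact ⟨hb, hbE, a, ha, haE⟩
  obtain ⟨-, ya, hya, haya⟩ := haE
  obtain ⟨-, yb, hyb, hbyb⟩ := hbE
  have hE : ∀ y : (B'ᶜ : Set V), (G.induce B'ᶜ).connectedComponentMk y = E → (y : V) ∉ N :=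
    fun y hy hyN => hEN ⟨y, hyN, y.2, hy⟩
  have hyaA : (ya : V) ∈ A := (hA ha haya).resolve_right (hE ya hya)
  have hybA : (yb : V) ∈ A :=
    SimpleGraph.Reachable.mem_of_adj_mem_union (A := Subtype.val ⁻¹' A)
      (N := Subtype.val ⁻¹' N) (fun _ _ hx hxz => hA hx hxz)
      (ConnectedComponent.exact (hya.trans hyb.symm))
      (fun x hx => hE x (ConnectedComponent.sound hx.symm ▸ hya)) hyaA
  exact mem_sepSet_of_mem ((hA hybA hbyb.symm).resolve_left hb) b.2

theorem mem_of_torso_reachable (hA : ∀ ⦃a z⦄, a ∈ A → G.Adj a z → z ∈ A ∪ N)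
    {x y : ((Subtype.val ⁻¹' sepSet G A N B' : Set B')ᶜ : Set B')}
    (hxy : ((torso G B').induce _).Reachable x y) (hx : ((x : B') : V) ∈ A) :
    ((y : B') : V) ∈ A :=
  SimpleGraph.Reachable.mem_of_adj_mem_union (A := Subtype.val ⁻¹' (Subtype.val ⁻¹' A)) (N := ∅)
    (fun _ z ha haz => Or.inl (by_contra fun hz => absurd (torso_adj_mem_sepSet hA ha hz haz) z.2))
    hxy (fun _ _ => id) hx

end Separation

theorem adj_mem_supp_union_compNbrs {V : Type} {G : SimpleGraph V} {B : Set V}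
    (C : (G.induce Bᶜ).ConnectedComponent) ⦃a z : V⦄ (ha : a ∈ Subtype.val '' C.supp)
    (haz : G.Adj a z) : z ∈ Subtype.val '' C.supp ∪ compNbrs G B C := by
  obtain ⟨a, ha, rfl⟩ := ha
  by_cases hz : z ∈ B
  · exact Or.inr ⟨hz, a, ha, haz.symm⟩
  · refine Or.inl ⟨⟨z, hz⟩, ?_, rfl⟩
    exact (ConnectedComponent.sound
      (show (G.induce Bᶜ).Adj a ⟨z, hz⟩ from haz).reachable.symm).trans ha

section Blocks

variable {V : Type} [Fintype V] {G : SimpleGraph V} {B B' : Set V}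

theorem IsBlock.adhesionLE_two (hB : IsBlock G B) : adhesionLE G B 2 := by
  rcases hB with ⟨-, h⟩ | ⟨-, -, h⟩ | ⟨-, -, h⟩
  · exact h
  · exact h
  · exact fun C => (h C).trans one_le_two

theorem IsBlock.ncard_compNbrs_lt (hB : IsBlock G B) (C : (G.induce Bᶜ).ConnectedComponent) :
    (compNbrs G B C).ncard < B.ncard := by
  rcases hB with ⟨⟨h3, -⟩, h⟩ | ⟨h3, -, h⟩ | ⟨h2, -, h⟩
  · rw [Set.ncard_eq_toFinset_card' B, Set.toFinset_card]
    exact (h C).trans_lt (Nat.lt_of_succ_lt h3)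
  · exact (h C).trans_lt h3.ge
  · exact (h C).trans_lt h2.ge

theorem IsBlock.torso_induce_reachable (hB : IsBlock G B) {S : Set B} (hS : S.ncard ≤ 2)
    (x y : (Sᶜ : Set B)) : ((torso G B).induce Sᶜ).Reachable x y := by
  rcases hB with ⟨⟨-, hconn⟩, -⟩ | ⟨-, htop, -⟩ | ⟨-, htop, -⟩
  · exact (hconn S hS).preconnected x y
  all_goals
    obtain rfl | hxy := eq_or_ne x y
    · rfl
    · refine Adj.reachable ?_
      rw [induce_adj, htop, top_adj]
      exact Subtype.val_injective.ne hxy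

theorem IsBlock.mem_of_adj_mem_union {A N : Set V} (hB' : IsBlock G B')
    (hA : ∀ ⦃a z⦄, a ∈ A → G.Adj a z → z ∈ A ∪ N) (hN : N.ncard ≤ 2) {a b : V}
    (ha : a ∈ B') (hb : b ∈ B') (haA : a ∈ A) (haS : a ∉ sepSet G A N B')
    (hbS : b ∉ sepSet G A N B') : b ∈ A := by
  have hS : (Subtype.val ⁻¹' sepSet G A N B' : Set B').ncard ≤ 2 :=
    calc (Subtype.val ⁻¹' sepSet G A N B' : Set B').ncard ≤ (sepSet G A N B').ncard :=
          Set.ncard_le_ncard_of_injOn Subtype.val (fun _ hx => hx) Subtype.val_injective.injOn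
      _ ≤ N.ncard := ncard_sepSet_le hB'.adhesionLE_two
      _ ≤ 2 := hN
  exact mem_of_torso_reachable hA (hB'.torso_induce_reachable hS ⟨⟨a, ha⟩, haS⟩ ⟨⟨b, hb⟩, hbS⟩) haA

theorem IsBlock.inter_subset_sepSet (hB' : IsBlock G B') (hB : adhesionLE G B 2)
    (C : (G.induce Bᶜ).ConnectedComponent) {v : (Bᶜ : Set V)} (hv : v ∈ C.supp)
    (hvB' : (v : V) ∈ B') :
    B ∩ B' ⊆ sepSet G (Subtype.val '' C.supp) (compNbrs G B C) B' := by
  rintro w ⟨hwB, hwB'⟩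
  by_contra hwS
  have hvA : (v : V) ∈ Subtype.val '' C.supp := ⟨v, hv, rfl⟩
  have hvS : (v : V) ∉ sepSet G _ (compNbrs G B C) B' := notMem_sepSet hvA fun h => v.2 h.1
  obtain ⟨w', -, rfl⟩ := hB'.mem_of_adj_mem_union (adj_mem_supp_union_compNbrs C) (hB C)
    hvB' hwB' hvA hvS hwS
  exact w'.2 hwB

theorem IsBlock.not_subset (hB : IsBlock G B) (hB' : IsBlock G B') (hne : B ≠ B') :
    ¬ B ⊆ B' := by
  intro hsub
  obtain ⟨v, hvB', hvB⟩ := Set.exists_of_ssubset (hsub.ssubset_of_ne hne)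
  set C := (G.induce Bᶜ).connectedComponentMk ⟨v, hvB⟩
  have hBN : B ⊆ compNbrs G B C := by
    have := hB'.inter_subset_sepSet hB.adhesionLE_two C rfl hvB'
    rw [Set.inter_eq_left.mpr hsub] at this
    exact this.trans (sepSet_subset_of_subset fun _ hx => hsub hx.1)
  exact (Set.ncard_le_ncard hBN).not_gt (hB.ncard_compNbrs_lt C)

end Blocks

theorem blocks_incomparable_general {V : Type} [Fintype V] (G : SimpleGraph V)
    (B B' : Set V) (hB : IsBlock G B) (hB' : IsBlock G B')
    (hne : B ≠ B') :
    ¬ B ⊆ B' ∧ ¬ B' ⊆ B ∧ (B ∩ B').ncard ≤ 2 := by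
  have hB'B := hB'.not_subset hB hne.symm
  refine ⟨hB.not_subset hB' hne, hB'B, ?_⟩
  obtain ⟨v, hvB', hvB⟩ := Set.not_subset.mp hB'B
  set C := (G.induce Bᶜ).connectedComponentMk ⟨v, hvB⟩
  calc (B ∩ B').ncard
      ≤ (sepSet G (Subtype.val '' C.supp) (compNbrs G B C) B').ncard :=
        Set.ncard_le_ncard (hB'.inter_subset_sepSet hB.adhesionLE_two C rfl hvB')
    _ ≤ (compNbrs G B C).ncard := ncard_sepSet_le hB'.adhesionLE_two
    _ ≤ 2 := hB.adhesionLE_two C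

/-- Distinct blocks of a connected graph are incomparable and intersect in at
most 2 vertices. -/
theorem blocks_incomparable {V : Type} [Fintype V] (G : SimpleGraph V)
    (hG : G.Connected) (B B' : Set V) (hB : IsBlock G B) (hB' : IsBlock G B')
    (hne : B ≠ B') :
    ¬ B ⊆ B' ∧ ¬ B' ⊆ B ∧ (B ∩ B').ncard ≤ 2 :=
  blocks_incomparable_general G B B' hB hB' hne
end

section
/- Let G be a graph, B a proper block of G, and b₁,b₂,b₃ ∈ B pairwise distinct. Then B equals the set of all v ∈ V(G) such that no set S ⊆ V(G) \ {v} of cardinality at most 2 separates v from {b₁,b₂,b₃}. -/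
open SimpleGraph

attribute [local instance] Classical.propDecidable

/-- `S` separates `v` from a set `X`: `v ∉ S` and no vertex of `X \ S` is
reachable from `v` in `G - S`. -/
def SeparatesFrom {V : Type} (G : SimpleGraph V) (S : Set V) (v : V) (X : Set V) : Prop :=
  ∃ hv : v ∈ (Sᶜ : Set V), ∀ x ∈ X, ∀ hx : x ∈ (Sᶜ : Set V),
    ¬ (G.induce (Sᶜ : Set V)).Reachable ⟨v, hv⟩ ⟨x, hx⟩

/-!
For `v ∈ B` and `|S| ≤ 2`, replace each `s ∈ S \ B`, lying in the component `C` of `G - B`, by a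
vertex `t ≠ v` of `N(C)` (when there is one). The resulting set `S'` has at most two vertices and
misses `v` and some `bᵢ`, so `v` and `bᵢ` are joined in the 3-connected torso minus `S'`. Every
edge `uw` of that path lifts to a path in `G - S`: if it comes from a component `C`, then `C`
avoids `S`, since otherwise `N(C) = {u, w}` by adhesion and `S'` would meet `{u, w}`.
Conversely, for `v ∉ B` the neighbourhood `N(C)` of the component `C ∋ v` of `G - B` separates
`v` from `B`.
-/

theorem SimpleGraph.Reachable.of_adj_reachable {α β : Type*} {K : SimpleGraph α}
    {H : SimpleGraph β} (f : α → β) (hf : ∀ ⦃a b⦄, K.Adj a b → H.Reachable (f a) (f b))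
    {a b : α} (h : K.Reachable a b) : H.Reachable (f a) (f b) := by
  obtain ⟨p⟩ := h
  induction p with
  | nil => rfl
  | cons hadj _ ih => exact (hf hadj).trans ih

section

variable {V : Type} {G : SimpleGraph V} {B : Set V}

theorem SeparatesFrom.mono {S X Y : Set V} {v : V} (h : SeparatesFrom G S v X) (hYX : Y ⊆ X) :
    SeparatesFrom G S v Y :=
  ⟨h.1, fun x hx => h.2 x (hYX hx)⟩

theorem separatesFrom_compNbrs {v : V} (hv : v ∉ B) :
    SeparatesFrom G (compNbrs G B ((G.induce Bᶜ).connectedComponentMk ⟨v, hv⟩)) v B := by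
  set C := (G.induce Bᶜ).connectedComponentMk ⟨v, hv⟩
  let inC : Set ↥(compNbrs G B C)ᶜ :=
    {a | ∃ ha : (a : V) ∉ B, (G.induce Bᶜ).connectedComponentMk ⟨a, ha⟩ = C}
  have hclosed : ∀ a c, (G.induce (compNbrs G B C)ᶜ).Adj a c → a ∈ inC → c ∈ inC := by
    rintro a c hac ⟨ha, hCa⟩
    have hc : (c : V) ∉ B := fun hcB => c.2 ⟨hcB, ⟨a, ha⟩, hCa, hac.symm⟩
    have hac' : (G.induce Bᶜ).Adj ⟨a, ha⟩ ⟨c, hc⟩ := hac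
    exact ⟨hc, (ConnectedComponent.eq.mpr hac'.reachable).symm.trans hCa⟩
  refine ⟨fun h => hv h.1, fun x hxB _ ⟨p⟩ => ?_⟩
  obtain ⟨d, -, hd, hd'⟩ := p.exists_boundary_dart inC ⟨hv, rfl⟩ fun ⟨h, _⟩ => h hxB
  exact hd' (hclosed _ _ d.adj hd)

/-- `S'` stands in for `S` inside the torso of `B`. -/
def IsTorsoShadow (G : SimpleGraph V) (B S S' : Set V) : Prop :=
  S ∩ B ⊆ S' ∧ ∀ s ∈ S, ∀ hs : s ∉ B,
    1 < (compNbrs G B ((G.induce Bᶜ).connectedComponentMk ⟨s, hs⟩)).ncard →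
      (S' ∩ compNbrs G B ((G.induce Bᶜ).connectedComponentMk ⟨s, hs⟩)).Nonempty

theorem exists_isTorsoShadow [Finite V] (G : SimpleGraph V) (B : Set V) {S : Set V} {v : V}
    (hv : v ∉ S) : ∃ S', IsTorsoShadow G B S S' ∧ S'.ncard ≤ S.ncard ∧ v ∉ S' := by
  have : ∀ s, ∃ t, (t = v → s = v) ∧ (s ∈ B → t = s) ∧ ∀ hs : s ∉ B,
      1 < (compNbrs G B ((G.induce Bᶜ).connectedComponentMk ⟨s, hs⟩)).ncard →
        t ∈ compNbrs G B ((G.induce Bᶜ).connectedComponentMk ⟨s, hs⟩) := by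
    intro s
    by_cases hs : s ∈ B
    · exact ⟨s, id, fun _ => rfl, fun h => absurd hs h⟩
    by_cases h1 : 1 < (compNbrs G B ((G.induce Bᶜ).connectedComponentMk ⟨s, hs⟩)).ncard
    · obtain ⟨t, ht, htv⟩ := Set.exists_ne_of_one_lt_ncard h1 v
      exact ⟨t, fun h => absurd h htv, fun h => absurd h hs, fun _ _ => ht⟩
    · exact ⟨s, id, fun h => absurd h hs, fun _ h => absurd h h1⟩
  choose g hgv hgB hgC using this
  refine ⟨g '' S, ⟨?_, ?_⟩, Set.ncard_image_le, ?_⟩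
  · rintro s ⟨hsS, hsB⟩
    exact ⟨s, hsS, hgB s hsB⟩
  · exact fun s hsS hs h1 => ⟨g s, ⟨s, hsS, rfl⟩, hgC s hs h1⟩
  · rintro ⟨s, hsS, hgs⟩
    exact hv (hgv s hgs ▸ hsS)

theorem IsTorsoShadow.notMem_of_mem_supp [Finite V] {S S' : Set V}
    (hS' : IsTorsoShadow G B S S') (hadh : adhesionLE G B 2)
    {C : (G.induce Bᶜ).ConnectedComponent} {u w : V}
    (hu : u ∈ compNbrs G B C) (hw : w ∈ compNbrs G B C) (huw : u ≠ w) (huS' : u ∉ S')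
    (hwS' : w ∉ S') {x : ↥Bᶜ} (hx : x ∈ C.supp) : (x : V) ∉ S := by
  intro hxS
  have hpair : {u, w} = compNbrs G B C :=
    Set.eq_of_subset_of_ncard_le (by rintro _ (rfl | rfl) <;> assumption)
      (by rw [Set.ncard_pair huw]; exact hadh C)
  rw [ConnectedComponent.mem_supp_iff] at hx
  subst hx
  obtain ⟨t, htS', htC⟩ := hS'.2 x hxS x.2 (by rw [← hpair, Set.ncard_pair huw]; norm_num)
  rw [← hpair] at htC
  rcases htC with rfl | rfl
  exacts [huS' htS', hwS' htS']

theorem IsTorsoShadow.reachable_of_torso_adj [Finite V] {S S' : Set V}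
    (hS' : IsTorsoShadow G B S S') (hadh : adhesionLE G B 2) {u w : B} (huw : (torso G B).Adj u w)
    (huS' : (u : V) ∉ S') (hwS' : (w : V) ∉ S') (huS : (u : V) ∉ S) (hwS : (w : V) ∉ S) :
    (G.induce Sᶜ).Reachable ⟨u, huS⟩ ⟨w, hwS⟩ := by
  obtain ⟨hne, hadj | ⟨C, huC, hwC⟩⟩ := huw
  · exact Adj.reachable hadj
  have hCS : ∀ x ∈ C.supp, (x : V) ∉ S := fun x hx =>
    hS'.notMem_of_mem_supp hadh huC hwC (Subtype.coe_ne_coe.2 hne) huS' hwS' hx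
  let f : C.toSimpleGraph →g G.induce Sᶜ :=
    { toFun := fun x => ⟨x.1.1, hCS x.1 x.2⟩, map_rel' := fun h => h }
  obtain ⟨-, yu, hyu, hadju⟩ := huC
  obtain ⟨-, yw, hyw, hadjw⟩ := hwC
  have hadju' : (G.induce Sᶜ).Adj ⟨u, huS⟩ ⟨yu, hCS yu hyu⟩ := hadju
  have hadjw' : (G.induce Sᶜ).Adj ⟨yw, hCS yw hyw⟩ ⟨w, hwS⟩ := hadjw.symm
  exact hadju'.reachable.trans (((C.reachable_toSimpleGraph hyu hyw).map f).trans hadjw'.reachable)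

theorem not_separatesFrom_of_isProperBlock [Fintype V] (hB : IsProperBlock G B)
    {S S' X : Set V} (hS' : IsTorsoShadow G B S S') (hS'card : S'.ncard ≤ 2) {v b : V}
    (hv : v ∈ B) (hb : b ∈ B) (hvS' : v ∉ S') (hbS' : b ∉ S') (hbX : b ∈ X) :
    ¬ SeparatesFrom G S v X := by
  have hBS : ∀ x ∈ B, x ∉ S' → x ∉ S := fun x hx hxS' hxS => hxS' (hS'.1 ⟨hxS, hx⟩)
  let T : Set B := Subtype.val ⁻¹' S'
  have hT : T.ncard ≤ 3 - 1 :=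
    (Set.ncard_le_ncard_of_injOn Subtype.val (fun _ h => h) Subtype.val_injective.injOn).trans
      hS'card
  let f : ↥Tᶜ → ↥Sᶜ := fun a => ⟨a.1.1, hBS _ a.1.2 a.2⟩
  have hvb : (G.induce Sᶜ).Reachable (f ⟨⟨v, hv⟩, hvS'⟩) (f ⟨⟨b, hb⟩, hbS'⟩) :=
    ((hB.1.2 T hT).preconnected _ _).of_adj_reachable f fun a c hac =>
      hS'.reachable_of_torso_adj hB.2 hac a.2 c.2 _ _
  exact fun ⟨_, hsep⟩ => hsep b hbX (hBS b hb hbS') hvb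

end

/-- **Characterisation of proper blocks.** If `B` is a proper block of `G` and
`b₁, b₂, b₃ ∈ B` are pairwise distinct, then `B` is exactly the set of all
vertices `v` such that no set `S ⊆ V(G) \ {v}` of cardinality at most 2
separates `v` from `{b₁, b₂, b₃}`. -/
theorem properBlock_characterisation {V : Type} [Fintype V] (G : SimpleGraph V)
    (B : Set V) (hB : IsProperBlock G B) (b₁ b₂ b₃ : V)
    (hb₁ : b₁ ∈ B) (hb₂ : b₂ ∈ B) (hb₃ : b₃ ∈ B)
    (h12 : b₁ ≠ b₂) (h13 : b₁ ≠ b₃) (h23 : b₂ ≠ b₃) :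
    B = {v : V | ∀ S : Set V, S.ncard ≤ 2 →
      ¬ SeparatesFrom G S v {b₁, b₂, b₃}} := by
  ext v
  refine ⟨fun hv S hS hsep => ?_, fun h => by_contra fun hv => ?_⟩
  · obtain ⟨S', hS', hcard, hvS'⟩ := exists_isTorsoShadow G B hsep.1
    have h3 : ({b₁, b₂, b₃} : Set V).ncard = 3 :=
      Set.ncard_eq_three.2 ⟨_, _, _, h12, h13, h23, rfl⟩
    obtain ⟨b, hbX, hbS'⟩ :=
      Set.exists_mem_notMem_of_ncard_lt_ncard (s := S') (t := {b₁, b₂, b₃}) (by omega)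
    have hbB : b ∈ B := by rcases hbX with rfl | rfl | rfl <;> assumption
    exact not_separatesFrom_of_isProperBlock hB hS' (hcard.trans hS) hv hbB hvS' hbS' hbX hsep
  · refine h _ (hB.2 _) ((separatesFrom_compNbrs hv).mono ?_)
    rintro x (rfl | rfl | rfl) <;> assumption
end
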